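/- Let a > 0. For the planar system Ṁ₁ = (1/a)M₂(M₁ - 1/2), Ṁ₂ = -(1/a)(M₁ - 1/2)(M₁ + 1): (i) the point (1/2, 0) is an equilibrium and lies on the circle (M₁+1)² + M₂² = 9/4; (ii) the circle (M₁+1)² + M₂² = 9/4 is invariant under the flow; (iii) every solution M : ℝ → ℝ² with initial value on this circle and M(0) ≠ (1/2, 0) is not periodic, i.e. there is no T > 0 with M(t+T) = M(t) for all t. -/

import Mathlib

/-!
In `x = M₁ + 1`, `y = M₂` the field is `(x - 3/2) / a • (y, -x)`, a rotation about the origin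
with variable speed, so `x² + y²` is conserved. The gap `w = 1/2 - M₁` solves the linear equation
`w' = (M₂ / a) w`, so it never vanishes once it is positive: a solution on the circle
`x² + y² = 9/4` other than the equilibrium never reaches it. Along such a solution
`M₂ / w = cot (θ / 2)`, `θ` the polar angle, and a direct computation using the circle equation
gives `(M₂ / w)' = -3 / (2a)`. A strictly decreasing function of the solution excludes a period.
-/

open Real

theorem eq_mul_exp_integral_of_hasDerivAt_mul {f g : ℝ → ℝ} (hg : Continuous g)
    (hf : ∀ t, HasDerivAt f (g t * f t) t) (t : ℝ) :
    f t = f 0 * exp (∫ s in (0 : ℝ)..t, g s) := by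
  set G : ℝ → ℝ := fun t => ∫ s in (0 : ℝ)..t, g s
  have hG : ∀ t, HasDerivAt G (g t) t := fun t => (hg.integral_hasStrictDerivAt 0 t).hasDerivAt
  have hconst : ∀ t, HasDerivAt (fun t => f t * exp (-G t)) 0 t := fun t =>
    ((hf t).mul (hG t).neg.exp).congr_deriv (by ring)
  have h := is_const_of_deriv_eq_zero (fun s => (hconst s).differentiableAt)
    (fun s => (hconst s).deriv) t 0
  simp only [G, intervalIntegral.integral_same, neg_zero, exp_zero, mul_one] at h
  rw [← h, mul_assoc, ← exp_add, neg_add_cancel, exp_zero, mul_one]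

section System

variable {a : ℝ} {M₁ M₂ : ℝ → ℝ}

theorem circle_invariant
    (h1 : ∀ t, HasDerivAt M₁ ((1 / a) * M₂ t * (M₁ t - 1 / 2)) t)
    (h2 : ∀ t, HasDerivAt M₂ (-(1 / a) * (M₁ t - 1 / 2) * (M₁ t + 1)) t)
    (h0 : (M₁ 0 + 1) ^ 2 + M₂ 0 ^ 2 = 9 / 4) (t : ℝ) :
    (M₁ t + 1) ^ 2 + M₂ t ^ 2 = 9 / 4 := by
  have hF : ∀ t, HasDerivAt (fun t => (M₁ t + 1) ^ 2 + M₂ t ^ 2) 0 t := fun t =>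
    ((((h1 t).add_const 1).pow 2).add ((h2 t).pow 2)).congr_deriv (by push_cast; ring)
  rw [← h0]
  exact is_const_of_deriv_eq_zero (fun s => (hF s).differentiableAt) (fun s => (hF s).deriv) t 0

theorem lt_half_of_lt_half (hM₂ : Continuous M₂)
    (h1 : ∀ t, HasDerivAt M₁ ((1 / a) * M₂ t * (M₁ t - 1 / 2)) t)
    (h0 : M₁ 0 < 1 / 2) (t : ℝ) : M₁ t < 1 / 2 := by
  have hw : ∀ t, HasDerivAt (fun t => 1 / 2 - M₁ t) ((1 / a) * M₂ t * (1 / 2 - M₁ t)) t :=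
    fun t => ((h1 t).const_sub (1 / 2)).congr_deriv (by ring)
  have hsol := eq_mul_exp_integral_of_hasDerivAt_mul (continuous_const.mul hM₂) hw t
  have hpos : 0 < 1 / 2 - M₁ t := hsol ▸ mul_pos (by linarith) (exp_pos _)
  linarith

theorem hasDerivAt_div_half_sub
    (h1 : ∀ t, HasDerivAt M₁ ((1 / a) * M₂ t * (M₁ t - 1 / 2)) t)
    (h2 : ∀ t, HasDerivAt M₂ (-(1 / a) * (M₁ t - 1 / 2) * (M₁ t + 1)) t) {t : ℝ}
    (hcirc : (M₁ t + 1) ^ 2 + M₂ t ^ 2 = 9 / 4) (hlt : M₁ t < 1 / 2) :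
    HasDerivAt (fun t => M₂ t / (1 / 2 - M₁ t)) (-(3 / (2 * a))) t := by
  have hw : 1 / 2 - M₁ t ≠ 0 := by linarith
  refine ((h2 t).div ((h1 t).const_sub (1 / 2)) hw).congr_deriv ?_
  have hM₂sq : M₂ t ^ 2 = (1 / 2 - M₁ t) * (M₁ t + 5 / 2) := by linear_combination hcirc
  rw [div_eq_iff (pow_ne_zero 2 hw)]
  linear_combination (1 / a) * (M₁ t - 1 / 2) * hM₂sq

theorem lt_half_of_on_circle {x y : ℝ} (h : (x + 1) ^ 2 + y ^ 2 = 9 / 4)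
    (hne : (x, y) ≠ (1 / 2, 0)) : x < 1 / 2 := by
  rcases lt_or_eq_of_le (show x ≤ 1 / 2 by nlinarith [sq_nonneg y]) with hlt | rfl
  · exact hlt
  · exact absurd (by simpa using (show y ^ 2 = 0 by linarith)) hne

theorem not_periodic_of_on_circle (ha : 0 < a)
    (h1 : ∀ t, HasDerivAt M₁ ((1 / a) * M₂ t * (M₁ t - 1 / 2)) t)
    (h2 : ∀ t, HasDerivAt M₂ (-(1 / a) * (M₁ t - 1 / 2) * (M₁ t + 1)) t)
    (h0 : (M₁ 0 + 1) ^ 2 + M₂ 0 ^ 2 = 9 / 4) (hne : (M₁ 0, M₂ 0) ≠ (1 / 2, 0)) :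
    ¬ ∃ T : ℝ, 0 < T ∧ ∀ t : ℝ, (M₁ (t + T), M₂ (t + T)) = (M₁ t, M₂ t) := by
  rintro ⟨T, hT, hper⟩
  have hM₂ : Continuous M₂ := continuous_iff_continuousAt.2 fun t => (h2 t).continuousAt
  have hlt := lt_half_of_lt_half hM₂ h1 (lt_half_of_on_circle h0 hne)
  have hanti : StrictAnti fun t => M₂ t / (1 / 2 - M₁ t) :=
    strictAnti_of_hasDerivAt_neg
      (fun t => hasDerivAt_div_half_sub h1 h2 (circle_invariant h1 h2 h0 t) (hlt t))
      (fun _ => neg_neg_of_pos (by positivity))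
  have hdecr := hanti (lt_add_of_pos_right 0 hT)
  obtain ⟨hper₁, hper₂⟩ := Prod.mk.inj (hper 0)
  simp only [hper₁, hper₂, lt_irrefl] at hdecr

end System

theorem stmt_2 (a : ℝ) (ha : 0 < a) :
    ((fun p : ℝ × ℝ =>
        ((1 / a) * p.2 * (p.1 - 1 / 2),
          -(1 / a) * (p.1 - 1 / 2) * (p.1 + 1))) ((1 : ℝ) / 2, 0) = (0, 0) ∧
      ((1 : ℝ) / 2 + 1) ^ 2 + (0 : ℝ) ^ 2 = 9 / 4) ∧
    (∀ M₁ M₂ : ℝ → ℝ,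
      (∀ t, HasDerivAt M₁ ((1 / a) * M₂ t * (M₁ t - 1 / 2)) t) →
      (∀ t, HasDerivAt M₂ (-(1 / a) * (M₁ t - 1 / 2) * (M₁ t + 1)) t) →
      (M₁ 0 + 1) ^ 2 + M₂ 0 ^ 2 = 9 / 4 →
      ∀ t : ℝ, (M₁ t + 1) ^ 2 + M₂ t ^ 2 = 9 / 4) ∧
    (∀ M₁ M₂ : ℝ → ℝ,
      (∀ t, HasDerivAt M₁ ((1 / a) * M₂ t * (M₁ t - 1 / 2)) t) →
      (∀ t, HasDerivAt M₂ (-(1 / a) * (M₁ t - 1 / 2) * (M₁ t + 1)) t) →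
      (M₁ 0 + 1) ^ 2 + M₂ 0 ^ 2 = 9 / 4 →
      (M₁ 0, M₂ 0) ≠ (1 / 2, 0) →
      ¬ ∃ T : ℝ, 0 < T ∧ ∀ t : ℝ, (M₁ (t + T), M₂ (t + T)) = (M₁ t, M₂ t)) :=
  ⟨⟨by norm_num, by norm_num⟩, fun _ _ h1 h2 h0 => circle_invariant h1 h2 h0,
    fun _ _ h1 h2 h0 hne => not_periodic_of_on_circle ha h1 h2 h0 hne⟩
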